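/- If U and V are equivalent after extension via invertible operators E and F whose blocks (and those of their inverses) are E_{ij}, F_{ij}, E_{ij}^{(-1)}, F_{ij}^{(-1)}, then U and V are also equivalent after extension with extension spaces X₀ = Y and Y₀ = X via the operators Ẽ = [[-E₁₁, U],[F₁₂E₂₁, F₁₁]] and F̃ = [[-F₁₁, I_Y],[F₁₂⁽⁻¹⁾E₂₁⁽⁻¹⁾U, F₁₁⁽⁻¹⁾]], whose inverses are Ẽ⁻¹ = [[-E₁₁⁽⁻¹⁾, V],[F₁₂⁽⁻¹⁾E₂₁⁽⁻¹⁾, F₁₁⁽⁻¹⁾]] and F̃⁻¹ = [[-F₁₁⁽⁻¹⁾, I_X],[F₁₂E₂₁V, F₁₁]]. -/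
import Mathlib


open ContinuousLinearMap

/-- 2×2 block operator matrix `[[A, B],[C, D]] : X ⊕ Y → X' ⊕ Y'`. -/
noncomputable def blk {X Y X' Y' : Type*} [NormedAddCommGroup X] [NormedSpace ℝ X]
    [NormedAddCommGroup Y] [NormedSpace ℝ Y] [NormedAddCommGroup X'] [NormedSpace ℝ X']
    [NormedAddCommGroup Y'] [NormedSpace ℝ Y']
    (A : X →L[ℝ] X') (B : Y →L[ℝ] X') (C : X →L[ℝ] Y') (D : Y →L[ℝ] Y') :
    (X × Y) →L[ℝ] (X' × Y') :=
  (A.coprod B).prod (C.coprod D)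

section blocks
variable {X Y X' Y' : Type*} [NormedAddCommGroup X] [NormedSpace ℝ X]
    [NormedAddCommGroup Y] [NormedSpace ℝ Y] [NormedAddCommGroup X'] [NormedSpace ℝ X']
    [NormedAddCommGroup Y'] [NormedSpace ℝ Y']

/-- (1,1)-entry of a block operator. -/
noncomputable def b11 (T : (X × Y) →L[ℝ] (X' × Y')) : X →L[ℝ] X' :=
  (ContinuousLinearMap.fst ℝ X' Y').comp (T.comp (ContinuousLinearMap.inl ℝ X Y))

/-- (1,2)-entry of a block operator. -/
noncomputable def b12 (T : (X × Y) →L[ℝ] (X' × Y')) : Y →L[ℝ] X' :=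
  (ContinuousLinearMap.fst ℝ X' Y').comp (T.comp (ContinuousLinearMap.inr ℝ X Y))

/-- (2,1)-entry of a block operator. -/
noncomputable def b21 (T : (X × Y) →L[ℝ] (X' × Y')) : X →L[ℝ] Y' :=
  (ContinuousLinearMap.snd ℝ X' Y').comp (T.comp (ContinuousLinearMap.inl ℝ X Y))

/-- (2,2)-entry of a block operator. -/
noncomputable def b22 (T : (X × Y) →L[ℝ] (X' × Y')) : Y →L[ℝ] Y' :=
  (ContinuousLinearMap.snd ℝ X' Y').comp (T.comp (ContinuousLinearMap.inr ℝ X Y))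

end blocks

section aux
variable {X Y X' Y' X'' Y'' : Type*} [NormedAddCommGroup X] [NormedSpace ℝ X]
    [NormedAddCommGroup Y] [NormedSpace ℝ Y] [NormedAddCommGroup X'] [NormedSpace ℝ X']
    [NormedAddCommGroup Y'] [NormedSpace ℝ Y']
    [NormedAddCommGroup X''] [NormedSpace ℝ X''] [NormedAddCommGroup Y''] [NormedSpace ℝ Y'']

lemma blk_apply (A : X →L[ℝ] X') (B : Y →L[ℝ] X') (C : X →L[ℝ] Y') (D : Y →L[ℝ] Y') (x y) :
    blk A B C D (x, y) = (A x + B y, C x + D y) := by simp [blk]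

lemma blk_comp (A : X' →L[ℝ] X'') (B : Y' →L[ℝ] X'') (C : X' →L[ℝ] Y'') (D : Y' →L[ℝ] Y'')
    (A' : X →L[ℝ] X') (B' : Y →L[ℝ] X') (C' : X →L[ℝ] Y') (D' : Y →L[ℝ] Y') :
    (blk A B C D).comp (blk A' B' C' D') =
      blk (A.comp A' + B.comp C') (A.comp B' + B.comp D')
          (C.comp A' + D.comp C') (C.comp B' + D.comp D') := by
  refine ContinuousLinearMap.ext fun p => ?_
  obtain ⟨x, y⟩ := p
  simp [blk_apply, Prod.ext_iff]
  constructor <;> abel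

lemma b11_blk (A : X →L[ℝ] X') (B : Y →L[ℝ] X') (C : X →L[ℝ] Y') (D : Y →L[ℝ] Y') :
    b11 (blk A B C D) = A := by ext x; simp [b11, blk_apply]
lemma b12_blk (A : X →L[ℝ] X') (B : Y →L[ℝ] X') (C : X →L[ℝ] Y') (D : Y →L[ℝ] Y') :
    b12 (blk A B C D) = B := by ext y; simp [b12, blk_apply]
lemma b21_blk (A : X →L[ℝ] X') (B : Y →L[ℝ] X') (C : X →L[ℝ] Y') (D : Y →L[ℝ] Y') :
    b21 (blk A B C D) = C := by ext x; simp [b21, blk_apply]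
lemma b22_blk (A : X →L[ℝ] X') (B : Y →L[ℝ] X') (C : X →L[ℝ] Y') (D : Y →L[ℝ] Y') :
    b22 (blk A B C D) = D := by ext y; simp [b22, blk_apply]

lemma blk_eq (T : (X × Y) →L[ℝ] (X' × Y')) : T = blk (b11 T) (b12 T) (b21 T) (b22 T) := by
  refine ContinuousLinearMap.ext fun p => ?_
  obtain ⟨x, y⟩ := p
  have h : (x, y) = ((x, 0) : X × Y) + (0, y) := by simp
  rw [blk_apply, h, map_add]
  simp [b11, b12, b21, b22, Prod.ext_iff]

lemma blk_id : ContinuousLinearMap.id ℝ (X × Y) =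
    blk (ContinuousLinearMap.id ℝ X) 0 0 (ContinuousLinearMap.id ℝ Y) := by
  refine ContinuousLinearMap.ext fun p => ?_
  obtain ⟨x, y⟩ := p
  simp [blk_apply]

lemma b11_comp (T : (X' × Y') →L[ℝ] (X'' × Y'')) (S : (X × Y) →L[ℝ] (X' × Y')) :
    b11 (T.comp S) = (b11 T).comp (b11 S) + (b12 T).comp (b21 S) := by
  conv_lhs => rw [blk_eq T, blk_eq S, blk_comp, b11_blk]
lemma b12_comp (T : (X' × Y') →L[ℝ] (X'' × Y'')) (S : (X × Y) →L[ℝ] (X' × Y')) :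
    b12 (T.comp S) = (b11 T).comp (b12 S) + (b12 T).comp (b22 S) := by
  conv_lhs => rw [blk_eq T, blk_eq S, blk_comp, b12_blk]
lemma b21_comp (T : (X' × Y') →L[ℝ] (X'' × Y'')) (S : (X × Y) →L[ℝ] (X' × Y')) :
    b21 (T.comp S) = (b21 T).comp (b11 S) + (b22 T).comp (b21 S) := by
  conv_lhs => rw [blk_eq T, blk_eq S, blk_comp, b21_blk]
lemma b22_comp (T : (X' × Y') →L[ℝ] (X'' × Y'')) (S : (X × Y) →L[ℝ] (X' × Y')) :
    b22 (T.comp S) = (b21 T).comp (b12 S) + (b22 T).comp (b22 S) := by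
  conv_lhs => rw [blk_eq T, blk_eq S, blk_comp, b22_blk]

lemma b11_id : b11 (ContinuousLinearMap.id ℝ (X × Y)) = ContinuousLinearMap.id ℝ X := by
  rw [blk_id, b11_blk]
lemma b12_id : b12 (ContinuousLinearMap.id ℝ (X × Y)) = 0 := by rw [blk_id, b12_blk]
lemma b21_id : b21 (ContinuousLinearMap.id ℝ (X × Y)) = 0 := by rw [blk_id, b21_blk]
lemma b22_id : b22 (ContinuousLinearMap.id ℝ (X × Y)) = ContinuousLinearMap.id ℝ Y := by
  rw [blk_id, b22_blk]

end aux

/-- From equivalence after extension one gets equivalence after extension in the special form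
with extension spaces `X₀ = Y`, `Y₀ = X`, via explicit formulas. -/
theorem stmt7 {X Y X₀ Y₀ : Type*} [NormedAddCommGroup X] [NormedSpace ℝ X] [CompleteSpace X]
    [NormedAddCommGroup Y] [NormedSpace ℝ Y] [CompleteSpace Y]
    [NormedAddCommGroup X₀] [NormedSpace ℝ X₀] [CompleteSpace X₀]
    [NormedAddCommGroup Y₀] [NormedSpace ℝ Y₀] [CompleteSpace Y₀]
    (U : X →L[ℝ] X) (V : Y →L[ℝ] Y)
    (E : (Y × Y₀) →L[ℝ] (X × X₀)) (Einv : (X × X₀) →L[ℝ] (Y × Y₀))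
    (F : (X × X₀) →L[ℝ] (Y × Y₀)) (Finv : (Y × Y₀) →L[ℝ] (X × X₀))
    (hE1 : E.comp Einv = ContinuousLinearMap.id ℝ (X × X₀))
    (hE2 : Einv.comp E = ContinuousLinearMap.id ℝ (Y × Y₀))
    (hF1 : F.comp Finv = ContinuousLinearMap.id ℝ (Y × Y₀))
    (hF2 : Finv.comp F = ContinuousLinearMap.id ℝ (X × X₀))
    (hEq : blk U 0 0 (ContinuousLinearMap.id ℝ X₀) =
      E.comp ((blk V 0 0 (ContinuousLinearMap.id ℝ Y₀)).comp F))
    (Et : (Y × X) →L[ℝ] (X × Y))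
    (hEt : Et = blk (-(b11 E)) U ((b12 F).comp (b21 E)) (b11 F))
    (Ft : (X × Y) →L[ℝ] (Y × X))
    (hFt : Ft = blk (-(b11 F)) (ContinuousLinearMap.id ℝ Y)
      ((b12 Finv).comp ((b21 Einv).comp U)) (b11 Finv))
    (Et' : (X × Y) →L[ℝ] (Y × X))
    (hEt' : Et' = blk (-(b11 Einv)) V ((b12 Finv).comp (b21 Einv)) (b11 Finv))
    (Ft' : (Y × X) →L[ℝ] (X × Y))
    (hFt' : Ft' = blk (-(b11 Finv)) (ContinuousLinearMap.id ℝ X)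
      ((b12 F).comp ((b21 E).comp V)) (b11 F)) :
    Et.comp Et' = ContinuousLinearMap.id ℝ (X × Y) ∧
    Et'.comp Et = ContinuousLinearMap.id ℝ (Y × X) ∧
    Ft.comp Ft' = ContinuousLinearMap.id ℝ (Y × X) ∧
    Ft'.comp Ft = ContinuousLinearMap.id ℝ (X × Y) ∧
    blk U 0 0 (ContinuousLinearMap.id ℝ Y) =
      Et.comp ((blk V 0 0 (ContinuousLinearMap.id ℝ X)).comp Ft) := by
  -- inverse block identities
  have hEa : (b11 Einv).comp (b11 E) + (b12 Einv).comp (b21 E) = ContinuousLinearMap.id ℝ Y := by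
    have h := congrArg b11 hE2; rwa [b11_comp, b11_id] at h
  have hEb : (b21 Einv).comp (b11 E) + (b22 Einv).comp (b21 E) = 0 := by
    have h := congrArg b21 hE2; rwa [b21_comp, b21_id] at h
  have hEc : (b11 E).comp (b11 Einv) + (b12 E).comp (b21 Einv) = ContinuousLinearMap.id ℝ X := by
    have h := congrArg b11 hE1; rwa [b11_comp, b11_id] at h
  have hEd : (b21 E).comp (b11 Einv) + (b22 E).comp (b21 Einv) = 0 := by
    have h := congrArg b21 hE1; rwa [b21_comp, b21_id] at h
  have hFe : (b11 F).comp (b11 Finv) + (b12 F).comp (b21 Finv) = ContinuousLinearMap.id ℝ Y := by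
    have h := congrArg b11 hF1; rwa [b11_comp, b11_id] at h
  have hFf : (b11 F).comp (b12 Finv) + (b12 F).comp (b22 Finv) = 0 := by
    have h := congrArg b12 hF1; rwa [b12_comp, b12_id] at h
  have hFg : (b11 Finv).comp (b11 F) + (b12 Finv).comp (b21 F) = ContinuousLinearMap.id ℝ X := by
    have h := congrArg b11 hF2; rwa [b11_comp, b11_id] at h
  have hFh : (b11 Finv).comp (b12 F) + (b12 Finv).comp (b22 F) = 0 := by
    have h := congrArg b12 hF2; rwa [b12_comp, b12_id] at h
  -- intertwining identities
  have hI : Einv.comp (blk U 0 0 (ContinuousLinearMap.id ℝ X₀)) =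
      (blk V 0 0 (ContinuousLinearMap.id ℝ Y₀)).comp F := by
    rw [hEq, ← comp_assoc, hE2, id_comp]
  have hJ : (blk U 0 0 (ContinuousLinearMap.id ℝ X₀)).comp Finv =
      E.comp (blk V 0 0 (ContinuousLinearMap.id ℝ Y₀)) := by
    rw [hEq, comp_assoc, comp_assoc, hF1, comp_id]
  have I1 : (b11 Einv).comp U = V.comp (b11 F) := by
    have h := congrArg b11 hI
    simpa [b11_comp, b11_blk, b12_blk, b21_blk] using h
  have I2 : b12 Einv = V.comp (b12 F) := by
    have h := congrArg b12 hI
    simpa [b12_comp, b11_blk, b12_blk, b22_blk] using h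
  have I3 : (b21 Einv).comp U = b21 F := by
    have h := congrArg b21 hI
    simpa [b21_comp, b11_blk, b21_blk, b22_blk] using h
  have I4 : b22 Einv = b22 F := by
    have h := congrArg b22 hI
    simpa [b22_comp, b12_blk, b21_blk, b22_blk] using h
  have J1 : U.comp (b11 Finv) = (b11 E).comp V := by
    have h := congrArg b11 hJ
    simpa [b11_comp, b11_blk, b12_blk, b21_blk] using h
  have J2 : U.comp (b12 Finv) = b12 E := by
    have h := congrArg b12 hJ
    simpa [b12_comp, b11_blk, b12_blk, b22_blk] using h
  have J3 : b21 Finv = (b21 E).comp V := by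
    have h := congrArg b21 hJ
    simpa [b21_comp, b11_blk, b21_blk, b22_blk] using h
  have J4 : b22 Finv = b22 E := by
    have h := congrArg b22 hJ
    simpa [b22_comp, b12_blk, b21_blk, b22_blk] using h
  have hf : (b11 F).comp (b12 Finv) = -((b12 F).comp (b22 E)) := by
    rw [← J4]; exact eq_neg_of_add_eq_zero_left hFf
  have hh : (b11 Finv).comp (b12 F) = -((b12 Finv).comp (b22 Einv)) := by
    rw [I4]; exact eq_neg_of_add_eq_zero_left hFh
  refine ⟨?_, ?_, ?_, ?_, ?_⟩
  · rw [hEt, hEt', blk_comp, blk_id]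
    have hA : (b11 E).comp (b11 Einv) + U.comp ((b12 Finv).comp (b21 Einv)) =
        ContinuousLinearMap.id ℝ X := by
      rw [← comp_assoc U (b12 Finv) (b21 Einv), J2, hEc]
    have hB : -((b11 E).comp V) + U.comp (b11 Finv) = 0 := by rw [J1, neg_add_cancel]
    have hC : -((b12 F).comp ((b21 E).comp (b11 Einv))) +
        (b11 F).comp ((b12 Finv).comp (b21 Einv)) = 0 := by
      rw [← comp_assoc (b11 F) (b12 Finv) (b21 Einv), hf, neg_comp, comp_assoc,
        ← neg_add, ← comp_add, hEd, comp_zero, neg_zero]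
    have hD : (b12 F).comp ((b21 E).comp V) + (b11 F).comp (b11 Finv) =
        ContinuousLinearMap.id ℝ Y := by
      rw [← J3, add_comm ((b12 F).comp (b21 Finv)), hFe]
    simp only [neg_comp, comp_neg, neg_neg, id_comp, comp_id, comp_assoc]
    rw [hA, hB, hC, hD]
  · rw [hEt', hEt, blk_comp, blk_id]
    have hA : (b11 Einv).comp (b11 E) + V.comp ((b12 F).comp (b21 E)) =
        ContinuousLinearMap.id ℝ Y := by
      rw [← comp_assoc V (b12 F) (b21 E), ← I2, hEa]
    have hB : -((b11 Einv).comp U) + V.comp (b11 F) = 0 := by rw [I1, neg_add_cancel]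
    have hC : -((b12 Finv).comp ((b21 Einv).comp (b11 E))) +
        (b11 Finv).comp ((b12 F).comp (b21 E)) = 0 := by
      rw [← comp_assoc (b11 Finv) (b12 F) (b21 E), hh, neg_comp, comp_assoc,
        ← neg_add, ← comp_add, hEb, comp_zero, neg_zero]
    have hD : (b12 Finv).comp ((b21 Einv).comp U) + (b11 Finv).comp (b11 F) =
        ContinuousLinearMap.id ℝ X := by
      rw [I3, add_comm ((b12 Finv).comp (b21 F)), hFg]
    simp only [neg_comp, comp_neg, neg_neg, id_comp, comp_id, comp_assoc]
    rw [hA, hB, hC, hD]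
  · rw [hFt, hFt', blk_comp, blk_id]
    have hA : (b11 F).comp (b11 Finv) + (b12 F).comp ((b21 E).comp V) =
        ContinuousLinearMap.id ℝ Y := by rw [← J3, hFe]
    have hC : -((b12 Finv).comp ((b21 Einv).comp (U.comp (b11 Finv)))) +
        (b11 Finv).comp ((b12 F).comp ((b21 E).comp V)) = 0 := by
      rw [J1, ← comp_assoc (b11 Finv) (b12 F) ((b21 E).comp V), hh, neg_comp, comp_assoc,
        ← neg_add, ← comp_add, ← comp_assoc (b21 Einv) (b11 E) V,
        ← comp_assoc (b22 Einv) (b21 E) V, ← add_comp, hEb, zero_comp, comp_zero, neg_zero]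
    have hD : (b12 Finv).comp ((b21 Einv).comp U) + (b11 Finv).comp (b11 F) =
        ContinuousLinearMap.id ℝ X := by
      rw [I3, add_comm ((b12 Finv).comp (b21 F)), hFg]
    simp only [neg_comp, comp_neg, neg_neg, id_comp, comp_id, comp_assoc]
    rw [hA, hC, hD, neg_add_cancel]
  · rw [hFt', hFt, blk_comp, blk_id]
    have hA : (b11 Finv).comp (b11 F) + (b12 Finv).comp ((b21 Einv).comp U) =
        ContinuousLinearMap.id ℝ X := by rw [I3, hFg]
    have hC : -((b12 F).comp ((b21 E).comp (V.comp (b11 F)))) +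
        (b11 F).comp ((b12 Finv).comp ((b21 Einv).comp U)) = 0 := by
      rw [← I1, ← comp_assoc (b11 F) (b12 Finv) ((b21 Einv).comp U), hf, neg_comp, comp_assoc,
        ← neg_add, ← comp_add, ← comp_assoc (b21 E) (b11 Einv) U,
        ← comp_assoc (b22 E) (b21 Einv) U, ← add_comp, hEd, zero_comp, comp_zero, neg_zero]
    have hD : (b12 F).comp ((b21 E).comp V) + (b11 F).comp (b11 Finv) =
        ContinuousLinearMap.id ℝ Y := by
      rw [← J3, add_comm ((b12 F).comp (b21 Finv)), hFe]
    simp only [neg_comp, comp_neg, neg_neg, id_comp, comp_id, comp_assoc]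
    rw [hA, hC, hD, neg_add_cancel]
  · rw [hEt, hFt, blk_comp, blk_comp]
    have hA : (b11 E).comp (V.comp (b11 F)) + U.comp ((b12 Finv).comp ((b21 Einv).comp U)) =
        U := by
      rw [← comp_assoc (b11 E) V (b11 F), ← J1, comp_assoc U (b11 Finv) (b11 F), I3,
        ← comp_add, hFg, comp_id]
    have hB : -((b11 E).comp V) + U.comp (b11 Finv) = 0 := by rw [J1, neg_add_cancel]
    have hC : -((b12 F).comp ((b21 E).comp (V.comp (b11 F)))) +
        (b11 F).comp ((b12 Finv).comp ((b21 Einv).comp U)) = 0 := by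
      rw [← I1, ← comp_assoc (b11 F) (b12 Finv) ((b21 Einv).comp U), hf, neg_comp, comp_assoc,
        ← neg_add, ← comp_add, ← comp_assoc (b21 E) (b11 Einv) U,
        ← comp_assoc (b22 E) (b21 Einv) U, ← add_comp, hEd, zero_comp, comp_zero, neg_zero]
    have hD : (b12 F).comp ((b21 E).comp V) + (b11 F).comp (b11 Finv) =
        ContinuousLinearMap.id ℝ Y := by
      rw [← J3, add_comm ((b12 F).comp (b21 Finv)), hFe]
    simp only [neg_comp, comp_neg, neg_neg, id_comp, comp_id, zero_comp, comp_zero,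
      zero_add, add_zero, neg_zero, comp_assoc]
    rw [hA, hB, hC, hD]
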